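/- Let p ∈ [1/2, 1) and q ∈ (1/2, 1). Define p̃ = p·q + (1−p)·(1−q), so that 1−p̃ = (1−p)·q + p·(1−q). Then log( p̃/(1−p̃) ) ≤ q·log( p/(1−p) ). (In particular, taking p = σ(xᵀθ) and q = σ(ε), the log-odds of the randomized-response label are at most a σ(ε)-fraction of the clear-text log-odds whenever the label 1 is at least as likely as the label 0.) -/
import Mathlib


/-- for `p ∈ [1/2, 1)` and `q ∈ (1/2, 1)`, the log-odds of
`p̃ = p·q + (1−p)·(1−q)` (with `1−p̃ = (1−p)·q + p·(1−q)`) are at most a `q`-fraction of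
the log-odds of `p`: `log(p̃/(1−p̃)) ≤ q·log(p/(1−p))`. -/
theorem rr_logit_contraction (p q : ℝ)
    (hp : p ∈ Set.Ico (1/2 : ℝ) 1) (hq : q ∈ Set.Ioo (1/2 : ℝ) 1) :
    Real.log ((p * q + (1 - p) * (1 - q)) / (1 - (p * q + (1 - p) * (1 - q)))) ≤
      q * Real.log (p / (1 - p)) := by
  obtain ⟨hp1, hp2⟩ := hp
  obtain ⟨hq1, hq2⟩ := hq
  have hp0 : (0:ℝ) < p := by linarith
  have hp1' : (0:ℝ) < 1 - p := by linarith
  have hq0 : (0:ℝ) < q := by linarith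
  have hq1' : (0:ℝ) < 1 - q := by linarith
  set pt : ℝ := p * q + (1 - p) * (1 - q) with hpt
  have hpt0 : 0 < pt := by positivity
  have hpt1 : 0 < 1 - pt := by
    have : 1 - pt = (1 - p) * q + p * (1 - q) := by ring
    rw [this]; positivity
  -- (a) pt ≤ p
  have ha : Real.log pt ≤ Real.log p := by
    apply Real.log_le_log hpt0
    nlinarith
  -- (b) concavity of log
  have hc : q * Real.log (1 - p) + (1 - q) * Real.log p ≤ Real.log (1 - pt) := by
    have := (strictConcaveOn_log_Ioi.concaveOn).2 (Set.mem_Ioi.mpr hp1')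
      (Set.mem_Ioi.mpr hp0) (le_of_lt hq0) (le_of_lt hq1') (by ring)
    simpa [smul_eq_mul, show q * (1 - p) + (1 - q) * p = 1 - pt by ring] using this
  rw [Real.log_div (ne_of_gt hpt0) (ne_of_gt hpt1),
      Real.log_div (ne_of_gt hp0) (ne_of_gt hp1')]
  nlinarith [hc, ha]
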